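/- Let h_aff : ℝⁿ → ℝ be affine with gradient a, and let Σ be symmetric positive semidefinite. Then the condition h_aff(z) + ‖aᵀΣ^{1/2}‖₂ ≤ 0 holds if and only if h_aff(z + Σ^{1/2}γ) ≤ 0 for all γ in the closed unit ball of ℝⁿ. -/

import Mathlib

open Matrix

open scoped ComplexOrder in
/-- The old Mathlib `Matrix.PosSemidef.sqrt` (removed upstream), restated with its old definition. -/
noncomputable def Matrix.PosSemidef.sqrt {n 𝕜 : Type*} [Fintype n] [DecidableEq n] [RCLike 𝕜]
    {A : Matrix n n 𝕜} (hA : A.PosSemidef) : Matrix n n 𝕜 :=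
  hA.1.eigenvectorUnitary.1 * diagonal ((↑) ∘ (√·) ∘ hA.1.eigenvalues) *
  (star hA.1.eigenvectorUnitary : Matrix n n 𝕜)

noncomputable def eunorm {n : ℕ} (v : Fin n → ℝ) : ℝ := Real.sqrt (∑ i, v i ^ 2)

/-!
The support function of the closed unit ball is the norm: `⟪v, γ⟫ ≤ ‖v‖‖γ‖ ≤ ‖v‖` by
Cauchy–Schwarz, with equality at `γ = v / ‖v‖`. Since `aᵀ(z + Σ^{1/2}γ) = aᵀz + (aᵀΣ^{1/2})γ`,
the worst case of the affine constraint over the ball is `aᵀz + b + ‖aᵀΣ^{1/2}‖₂`.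
-/

section InnerProductSpace

open scoped RealInnerProductSpace

variable {E : Type*} [NormedAddCommGroup E] [InnerProductSpace ℝ E]

theorem exists_norm_le_one_inner_eq_norm (v : E) : ∃ γ : E, ‖γ‖ ≤ 1 ∧ ⟪v, γ⟫ = ‖v‖ := by
  rcases eq_or_ne v 0 with rfl | hv
  · exact ⟨0, by simp⟩
  refine ⟨‖v‖⁻¹ • v, (norm_smul_inv_norm hv).le, ?_⟩
  rw [real_inner_smul_right, real_inner_self_eq_norm_sq]
  field_simp

theorem add_norm_nonpos_iff_forall_inner (c : ℝ) (v : E) :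
    c + ‖v‖ ≤ 0 ↔ ∀ γ : E, ‖γ‖ ≤ 1 → c + ⟪v, γ⟫ ≤ 0 := by
  constructor
  · intro h γ hγ
    have : ⟪v, γ⟫ ≤ ‖v‖ :=
      calc ⟪v, γ⟫ ≤ ‖v‖ * ‖γ‖ := real_inner_le_norm v γ
        _ ≤ ‖v‖ := mul_le_of_le_one_right (norm_nonneg v) hγ
    linarith
  · intro h
    obtain ⟨γ, hγ, hvγ⟩ := exists_norm_le_one_inner_eq_norm v
    simpa [hvγ] using h γ hγ

end InnerProductSpace

theorem eunorm_eq_norm {n : ℕ} (v : Fin n → ℝ) :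
    eunorm v = ‖(WithLp.toLp 2 v : EuclideanSpace ℝ (Fin n))‖ := by
  simp [eunorm, EuclideanSpace.norm_eq]

theorem add_eunorm_nonpos_iff {n : ℕ} (c : ℝ) (v : Fin n → ℝ) :
    c + eunorm v ≤ 0 ↔ ∀ γ : Fin n → ℝ, eunorm γ ≤ 1 → c + v ⬝ᵥ γ ≤ 0 := by
  rw [eunorm_eq_norm, add_norm_nonpos_iff_forall_inner, (WithLp.equiv 2 (Fin n → ℝ)).forall_congr_left]
  simp [eunorm_eq_norm, EuclideanSpace.inner_toLp_toLp, dotProduct_comm]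

theorem affine_backoff_iff {n : ℕ} (a z : Fin n → ℝ) (b : ℝ)
    (S : Matrix (Fin n) (Fin n) ℝ) (hS : S.PosSemidef) :
    (a ⬝ᵥ z + b + eunorm (a ᵥ* hS.sqrt) ≤ 0) ↔
    (∀ γ : Fin n → ℝ, eunorm γ ≤ 1 → a ⬝ᵥ (z + hS.sqrt *ᵥ γ) + b ≤ 0) := by
  have shift : ∀ γ, a ⬝ᵥ (z + hS.sqrt *ᵥ γ) + b = (a ⬝ᵥ z + b) + (a ᵥ* hS.sqrt) ⬝ᵥ γ := by
    intro γ
    rw [dotProduct_add, dotProduct_mulVec]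
    ring
  simp only [shift]
  exact add_eunorm_nonpos_iff _ _
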